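/- arXiv:math/0503478 — 2 statements merged into one kernel-verified Lean document; each statement's English description precedes it below -/
import Mathlib

section
/- Every g ∈ 𝒢 is an upper bound of the optimal value function: for every g ∈ 𝒢 and every x ∈ S, g(x) ≥ J*(λ,x). -/
/-!
Choose, in every state `y`, an action `f y ∈ B_g(y)` attaining the minimum in condition (ii).
Along the stationary policy `f` the function `g` cannot increase from one state to a reachable
one, so `exp (λ (n g(y) + h(y)))` is a supersolution of the `n`-step recursion satisfied by the
expected exponential cost. Hence `E_x^f[exp (λ Σ_{t<n} C)] ≤ exp (λ (n g(x) + h(x) - min h))`,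
so `J(λ, f, x) ≤ g(x)` and a fortiori `J*(λ, x) ≤ g(x)`. The cruder bounds
`n min C ≤ J_n ≤ n max C`, valid for every policy, keep the `limsup` and the infimum over
policies away from their junk values.
-/

open scoped Classical BigOperators ENNReal

namespace RiskSensitive

/-- A (history-dependent, randomized) policy for a finite MDP: given the past
(chronological list of (state, action) pairs) and the current state, it assigns a
probability weight to each action, concentrated on the admissible actions. -/
structure Policy (S A : Type*) [Fintype S] [Fintype A] (Adm : S → Finset A) where
  toFun : List (S × A) → S → A → ℝ
  nonneg : ∀ h s a, 0 ≤ toFun h s a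
  sum_one : ∀ h s, ∑ a, toFun h s a = 1
  supp : ∀ h s a, a ∉ Adm s → toFun h s a = 0

variable {S A : Type*} [Fintype S] [Fintype A]
variable (Adm : S → Finset A) (p : S → A → S → ℝ) (C : S → A → ℝ) (lam : ℝ)

/-- Probability of a finite trajectory (list of (action, next-state) pairs), given the
history so far and the current state. -/
noncomputable def pathProbAux (π : Policy S A Adm) :
    List (S × A) → S → List (A × S) → ℝ
  | _, _, [] => 1
  | hist, x, (a, y) :: rest =>
      π.toFun hist x a * p x a y * pathProbAux π (hist ++ [(x, a)]) y rest

/-- `pathProb π x l` is `P_x^π[A_0 = a_0, X_1 = y_1, …]` for `l = [(a_0,y_1),…]`. -/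
noncomputable def pathProb (π : Policy S A Adm) (x : S) (l : List (A × S)) : ℝ :=
  pathProbAux Adm p π [] x l

/-- Probability of a cylinder event depending on the first `n` (action, next-state) pairs. -/
noncomputable def cylProb (π : Policy S A Adm) (x : S) (n : ℕ)
    (E : (Fin n → A × S) → Prop) : ℝ :=
  ∑ v : Fin n → A × S, if E v then pathProb Adm p π x (List.ofFn v) else 0

/-- The state `X_t` along the trajectory encoded by `l`, starting from `x`. -/
def stateAt (x : S) (l : List (A × S)) (t : ℕ) : S :=
  (l.take t).foldl (fun _ q => q.2) x

/-- The final state of the finite trajectory `l` started at `x`. -/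
def lastState (x : S) (l : List (A × S)) : S :=
  l.foldl (fun _ q => q.2) x

/-- `Σ_t w(X_t, A_t)` along the finite trajectory `l` started at `x`. -/
def costSum (w : S → A → ℝ) : S → List (A × S) → ℝ
  | _, [] => 0
  | x, (a, y) :: rest => w x a + costSum w y rest

/-- `J_n(λ,π,x) = (1/λ) log E_x^π[exp(λ Σ_{t<n} C(X_t,A_t))]`. -/
noncomputable def Jn (π : Policy S A Adm) (x : S) (n : ℕ) : ℝ :=
  (1 / lam) * Real.log (∑ v : Fin n → A × S,
    pathProb Adm p π x (List.ofFn v) * Real.exp (lam * costSum C x (List.ofFn v)))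

/-- The risk-sensitive average cost `J(λ,π,x) = limsup_n J_n(λ,π,x)/n`. -/
noncomputable def Javg (π : Policy S A Adm) (x : S) : ℝ :=
  Filter.limsup (fun n : ℕ => Jn Adm p C lam π x n / n) Filter.atTop

/-- Optimal risk-sensitive average cost `J*(λ,x)`. -/
noncomputable def Jopt (x : S) : ℝ :=
  ⨅ π : Policy S A Adm, Javg Adm p C lam π x

/-- `π` is `ε`-optimal at `x`. -/
def EpsOptimalAt (π : Policy S A Adm) (x : S) (ε : ℝ) : Prop :=
  Javg Adm p C lam π x ≤ Jopt Adm p C lam x + ε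

/-- `FirstExit Q v` : the trajectory `v` leaves `{Q}` for the first time exactly at its
last step, i.e. the exit time of `Q` equals `n`. -/
def FirstExit (Q : S → Prop) {n : ℕ} (v : Fin n → A × S) : Prop :=
  0 < n ∧ (∀ t : Fin n, (t : ℕ) + 1 < n → Q (v t).2) ∧
    ∀ t : Fin n, (t : ℕ) + 1 = n → ¬ Q (v t).2

/-- `E_x^π[ exp(Σ_{t<τ} w(X_t,A_t)) ]` where `τ = min{n ≥ 1 : ¬ Q (X_n)}` is the first
exit time from `Q` (the contribution of `[τ = ∞]` is null when `τ < ∞` a.s.). -/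
noncomputable def EexitExp (π : Policy S A Adm) (x : S) (Q : S → Prop)
    (w : S → A → ℝ) : ℝ≥0∞ :=
  ∑' n : ℕ, ∑ v : Fin n → A × S,
    if FirstExit Q v then
      ENNReal.ofReal (pathProb Adm p π x (List.ofFn v) *
        Real.exp (costSum w x (List.ofFn v)))
    else 0

/-- `E_x^π[ exp(Σ_{t<T} w(X_t,A_t)) ]` with `T` the first positive arrival time to `z`. -/
noncomputable def EhitExp (π : Policy S A Adm) (x z : S) (w : S → A → ℝ) : ℝ≥0∞ :=
  EexitExp Adm p π x (fun y => y ≠ z) w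

/-- `E_x^π[T]`, the expected first positive arrival time to `z`, computed as
`Σ_{n≥0} P_x^π[T > n]`. -/
noncomputable def ExpT (π : Policy S A Adm) (x z : S) : ℝ≥0∞ :=
  ∑' n : ℕ, ENNReal.ofReal
    (cylProb Adm p π x n (fun v => ∀ t : Fin n, (v t).2 ≠ z))

/-- `P_x^π[T > n]`, the probability that `z` is not visited during the first `n` steps. -/
noncomputable def survProb (π : Policy S A Adm) (x z : S) (n : ℕ) : ℝ :=
  cylProb Adm p π x n (fun v => ∀ t : Fin n, (v t).2 ≠ z)

/-- The stationary policy induced by a choice function `f ∈ 𝔽`. -/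
noncomputable def stationary (f : S → A) (hf : ∀ s, f s ∈ Adm s) : Policy S A Adm where
  toFun := fun _ s a => if a = f s then 1 else 0
  nonneg := by intro h s a; (try dsimp only); split <;> norm_num
  sum_one := by intro h s; simp
  supp := by
    intro h s a ha
    try dsimp only
    rw [if_neg]
    intro hEq
    exact ha (hEq ▸ hf s)

/-- The simultaneous Doeblin condition: `E_x^f[T] ≤ M` for every state `x` and every
stationary policy `f`, where `T` is the first positive arrival time to `z`. -/
def Doeblin (z : S) (M : ℝ) : Prop :=
  0 < M ∧ ∀ (x : S) (f : S → A) (hf : ∀ s, f s ∈ Adm s),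
    ExpT Adm p (stationary Adm f hf) x z ≤ ENNReal.ofReal M

/-- `B_g(x) = {a ∈ A(x) : g(x) = max{g(y) : p_{xy}(a) > 0}}`. -/
def Bg (g : S → ℝ) (x : S) : Set A :=
  {a | a ∈ Adm x ∧ g x = sSup (g '' {y | 0 < p x a y})}

/-- The family `𝒢` of functions characterizing `J*(λ,·)`. -/
def Gclass : Set (S → ℝ) :=
  {g | (∀ x, g x = sInf ((fun a => sSup (g '' {y | 0 < p x a y})) '' (Adm x : Set A))) ∧
    ∃ h : S → ℝ, ∀ x,
      sInf ((fun a => Real.exp (lam * C x a) * ∑ y, p x a y * Real.exp (lam * h y)) ''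
        Bg Adm p g x) ≤ Real.exp (lam * g x + lam * h x)}

/-- The class `𝒫*` of policies which always select actions in `B*(X_t)`. -/
def Pstar : Set (Policy S A Adm) :=
  {π | ∀ (x : S) (t : ℕ),
    cylProb Adm p π x (t + 1)
      (fun v => (v (Fin.last t)).1 ∈
        Bg Adm p (Jopt Adm p C lam) (stateAt x (List.ofFn v) t)) = 1}

/-- The deviation function
`h(x) = inf_{π ∈ 𝒫*} (1/λ) log E_x^π[exp(λα Σ_{t<T}(C(X_t,A_t) − J*(λ,X_t)))]`. -/
noncomputable def hdev (z : S) (α : ℝ) (x : S) : EReal :=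
  ⨅ π ∈ Pstar Adm p C lam, ((lam⁻¹ : ℝ) : EReal) *
    ENNReal.log (EhitExp Adm p π x z
      (fun s a => lam * α * (C s a - Jopt Adm p C lam s)))

/-- `ψ(ε) = (1/λ) inf_{δ∈𝒫*} log E_z^δ[exp(λ Σ_{t<T}(C(X_t,A_t) − γ₀ − 2ε))]`. -/
noncomputable def psi (z : S) (ε : ℝ) : EReal :=
  ((lam⁻¹ : ℝ) : EReal) * ⨅ π ∈ Pstar Adm p C lam,
    ENNReal.log (EhitExp Adm p π z z
      (fun s a => lam * (C s a - Jopt Adm p C lam z - 2 * ε)))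

/-- `ξ₀ = −(1−α) log β / (λα)`. -/
noncomputable def xi0 (α β : ℝ) : ℝ := -((1 - α) * Real.log β) / (lam * α)

/-- `ξ₁`: 1 if `J*(λ,·)` is constant, otherwise the minimum gap between distinct
values of `J*(λ,·)`. -/
noncomputable def xi1 : ℝ :=
  if ∀ u v : S, Jopt Adm p C lam u = Jopt Adm p C lam v then 1
  else sInf {d | ∃ u v : S, Jopt Adm p C lam u < Jopt Adm p C lam v ∧
    d = Jopt Adm p C lam v - Jopt Adm p C lam u}

/-- `ξ = min{ξ₀, ξ₁}`. -/
noncomputable def xi (α β : ℝ) : ℝ := min (xi0 lam α β) (xi1 Adm p C lam)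

/-- The shifted policy obtained by prefixing the fixed history `pre`. -/
def shiftPolicy (π : Policy S A Adm) (pre : List (S × A)) : Policy S A Adm where
  toFun := fun h s a => π.toFun (pre ++ h) s a
  nonneg := fun h s a => π.nonneg _ s a
  sum_one := fun h s => π.sum_one _ s
  supp := fun h s a ha => π.supp _ s a ha

/-- The history (list of (state, action) pairs) along the trajectory `l` started at `x`. -/
def histOf : S → List (A × S) → List (S × A)
  | _, [] => []
  | x, (a, y) :: rest => (x, a) :: histOf y rest

def IsStochastic {S A : Type*} [Fintype S] (Adm : S → Finset A) (p : S → A → S → ℝ) : Prop :=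
  ∀ x, ∀ a ∈ Adm x, (∀ y, 0 ≤ p x a y) ∧ ∑ y, p x a y = 1

/-- `E^π[exp (Σ_{t<n} w(X_t, A_t))]` for the process started at `y` after the history `hist`. -/
noncomputable def expCost (π : Policy S A Adm) (w : S → A → ℝ) (hist : List (S × A)) (y : S)
    (n : ℕ) : ℝ :=
  ∑ v : Fin n → A × S,
    pathProbAux Adm p π hist y (List.ofFn v) * Real.exp (costSum w y (List.ofFn v))

lemma sum_fin_succ_fun {β : Type*} [Fintype β] (n : ℕ) (F : (Fin (n + 1) → β) → ℝ) :
    ∑ v, F v = ∑ q : β, ∑ v : Fin n → β, F (Fin.cons q v) := by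
  rw [← (Fin.consEquiv fun _ => β).sum_comp, Fintype.sum_prod_type]
  rfl

lemma costSum_const_mul {S A : Type*} (c : ℝ) (w : S → A → ℝ) (y : S) (l : List (A × S)) :
    costSum (fun s a => c * w s a) y l = c * costSum w y l := by
  induction l generalizing y with
  | nil => simp [costSum]
  | cons q l ih => simp [costSum, ih, mul_add]

section

open Filter

lemma limsup_div_natCast_le {u : ℕ → ℝ} {a b c : ℝ} (hlow : ∀ n, n * c ≤ u n)
    (hup : ∀ n, u n ≤ n * a + b) : limsup (fun n => u n / n) atTop ≤ a := by
  have hv : Tendsto (fun n : ℕ => a + b / n) atTop (nhds a) := by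
    simpa using tendsto_const_nhds.add (tendsto_const_div_atTop_nhds_zero_nat b)
  have hcobdd : IsCoboundedUnder (· ≤ ·) atTop fun n => u n / n := by
    refine isCoboundedUnder_le_of_eventually_le atTop (x := c) ?_
    filter_upwards [eventually_gt_atTop 0] with n hn
    rw [le_div_iff₀ (by positivity), mul_comm]
    exact hlow n
  rw [← hv.limsup_eq]
  refine limsup_le_limsup ?_ hcobdd hv.isBoundedUnder_le
  filter_upwards [eventually_gt_atTop 0] with n hn
  rw [div_le_iff₀ (by positivity), add_mul, div_mul_cancel₀ _ (by positivity), mul_comm]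
  exact hup n

lemma le_limsup_div_natCast {u : ℕ → ℝ} {a c : ℝ} (hlow : ∀ n, n * c ≤ u n)
    (hup : ∀ n, u n ≤ n * a) : c ≤ limsup (fun n => u n / n) atTop := by
  refine le_limsup_of_frequently_le (Eventually.frequently ?_) ?_
  · filter_upwards [eventually_gt_atTop 0] with n hn
    rw [le_div_iff₀ (by positivity), mul_comm]
    exact hlow n
  · refine isBoundedUnder_of_eventually_le (a := a) ?_
    filter_upwards [eventually_gt_atTop 0] with n hn
    rw [div_le_iff₀ (by positivity), mul_comm]
    exact hup n

end

lemma le_of_mem_Bg {S A : Type*} [Finite S] {Adm : S → Finset A} {p : S → A → S → ℝ}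
    {g : S → ℝ} {y z : S} {a : A} (ha : a ∈ Bg Adm p g y) (hz : 0 < p y a z) : g z ≤ g y := by
  rw [ha.2]
  exact le_csSup (Set.toFinite _).bddAbove ⟨z, hz, rfl⟩

lemma Bg_nonempty {S A : Type*} {Adm : S → Finset A} {p : S → A → S → ℝ} {g : S → ℝ} {y : S}
    (hA : (Adm y).Nonempty)
    (hg : g y = sInf ((fun a => sSup (g '' {z | 0 < p y a z})) '' (Adm y : Set A))) :
    (Bg Adm p g y).Nonempty := by
  obtain ⟨a, ha, hmin⟩ :=
    ((Finset.coe_nonempty.mpr hA).image fun a => sSup (g '' {z | 0 < p y a z})).csInf_mem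
      ((Adm y).finite_toSet.image _)
  exact ⟨a, ha, hg.trans hmin.symm⟩

lemma exists_stationary_of_mem_Gclass {S A : Type*} [Fintype S] {Adm : S → Finset A}
    {p : S → A → S → ℝ} {C : S → A → ℝ} {lam : ℝ} (hA : ∀ x, (Adm x).Nonempty) {g : S → ℝ}
    (hg : g ∈ Gclass Adm p C lam) :
    ∃ h : S → ℝ, ∃ f : S → A, (∀ y, f y ∈ Adm y) ∧ (∀ y z, 0 < p y (f y) z → g z ≤ g y) ∧
      ∀ y, Real.exp (lam * C y (f y)) * ∑ z, p y (f y) z * Real.exp (lam * h z) ≤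
        Real.exp (lam * g y + lam * h y) := by
  obtain ⟨hmin, h, hpoisson⟩ := hg
  have hsel : ∀ y, ∃ a ∈ Bg Adm p g y,
      Real.exp (lam * C y a) * ∑ z, p y a z * Real.exp (lam * h z) ≤
        Real.exp (lam * g y + lam * h y) := by
    intro y
    have hfin : (Bg Adm p g y).Finite := (Adm y).finite_toSet.subset fun a ha => ha.1
    obtain ⟨a, ha, heq⟩ := ((Bg_nonempty (hA y) (hmin y)).image fun a =>
      Real.exp (lam * C y a) * ∑ z, p y a z * Real.exp (lam * h z)).csInf_mem (hfin.image _)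
    exact ⟨a, ha, heq.trans_le (hpoisson y)⟩
  choose f hfB hf using hsel
  exact ⟨h, f, fun y => (hfB y).1, fun y z hz => le_of_mem_Bg (hfB y) hz, hf⟩

section

variable {Adm p C lam}
variable {π : Policy S A Adm} {w : S → A → ℝ} {hist : List (S × A)} {x y : S} {a : A}

lemma Policy.mem_of_toFun_ne_zero (h : π.toFun hist y a ≠ 0) : a ∈ Adm y := by
  by_contra ha
  exact h (π.supp hist y a ha)

lemma expCost_zero : expCost Adm p π w hist y 0 = 1 := by
  simp [expCost, pathProbAux, costSum]

lemma expCost_succ (n : ℕ) :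
    expCost Adm p π w hist y (n + 1) = ∑ a, π.toFun hist y a *
      (Real.exp (w y a) * ∑ z, p y a z * expCost Adm p π w (hist ++ [(y, a)]) z n) := by
  rw [expCost, sum_fin_succ_fun, Fintype.sum_prod_type]
  refine Finset.sum_congr rfl fun a _ => ?_
  simp only [expCost, Finset.mul_sum]
  refine Finset.sum_congr rfl fun z _ => Finset.sum_congr rfl fun v _ => ?_
  simp only [List.ofFn_succ, Fin.cons_zero, Fin.cons_succ, pathProbAux, costSum, Real.exp_add]
  ring

lemma Policy.mul_sum_le_mul_sum {X Y : A → ℝ}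
    (h : ∀ a, π.toFun hist y a ≠ 0 → X a ≤ Y a) :
    ∑ a, π.toFun hist y a * X a ≤ ∑ a, π.toFun hist y a * Y a := by
  refine Finset.sum_le_sum fun a _ => ?_
  by_cases ha : π.toFun hist y a = 0
  · simp [ha]
  · exact mul_le_mul_of_nonneg_left (h a ha) (π.nonneg hist y a)

lemma Policy.sum_mul_const (c : ℝ) : ∑ a, π.toFun hist y a * c = c := by
  rw [← Finset.sum_mul, π.sum_one, one_mul]

lemma expCost_le_of_supersolution (hp : IsStochastic Adm p) {Φ : ℕ → S → ℝ}
    (h0 : ∀ y, 1 ≤ Φ 0 y)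
    (hstep : ∀ n hist y a, π.toFun hist y a ≠ 0 →
      Real.exp (w y a) * ∑ z, p y a z * Φ n z ≤ Φ (n + 1) y) (n : ℕ) :
    ∀ hist y, expCost Adm p π w hist y n ≤ Φ n y := by
  induction n with
  | zero => intro hist y; simpa [expCost_zero] using h0 y
  | succ n ih =>
    intro hist y
    rw [expCost_succ, ← π.sum_mul_const (hist := hist) (Φ (n + 1) y)]
    refine π.mul_sum_le_mul_sum fun a ha => le_trans ?_ (hstep n hist y a ha)
    have hpa := (hp y a (Policy.mem_of_toFun_ne_zero ha)).1
    gcongr with z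
    · exact hpa z
    · exact ih _ z

lemma le_expCost_of_subsolution (hp : IsStochastic Adm p) {Φ : ℕ → S → ℝ}
    (h0 : ∀ y, Φ 0 y ≤ 1)
    (hstep : ∀ n hist y a, π.toFun hist y a ≠ 0 →
      Φ (n + 1) y ≤ Real.exp (w y a) * ∑ z, p y a z * Φ n z) (n : ℕ) :
    ∀ hist y, Φ n y ≤ expCost Adm p π w hist y n := by
  induction n with
  | zero => intro hist y; simpa [expCost_zero] using h0 y
  | succ n ih =>
    intro hist y
    rw [expCost_succ, ← π.sum_mul_const (hist := hist) (Φ (n + 1) y)]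
    refine π.mul_sum_le_mul_sum fun a ha => le_trans (hstep n hist y a ha) ?_
    have hpa := (hp y a (Policy.mem_of_toFun_ne_zero ha)).1
    gcongr with z
    · exact hpa z
    · exact ih _ z

lemma expCost_le_exp_mul (hp : IsStochastic Adm p) {c : ℝ} (hc : ∀ s a, w s a ≤ c) (n : ℕ) :
    expCost Adm p π w hist y n ≤ Real.exp (n * c) := by
  refine expCost_le_of_supersolution hp (Φ := fun n _ => Real.exp (n * c)) (by simp)
    (fun n hist y a ha => ?_) n hist y
  rw [← Finset.sum_mul, (hp y a (Policy.mem_of_toFun_ne_zero ha)).2, one_mul, Nat.cast_succ,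
    add_one_mul, Real.exp_add, mul_comm]
  gcongr
  exact hc y a

lemma exp_mul_le_expCost (hp : IsStochastic Adm p) {c : ℝ} (hc : ∀ s a, c ≤ w s a) (n : ℕ) :
    Real.exp (n * c) ≤ expCost Adm p π w hist y n := by
  refine le_expCost_of_subsolution hp (Φ := fun n _ => Real.exp (n * c)) (by simp)
    (fun n hist y a ha => ?_) n hist y
  rw [← Finset.sum_mul, (hp y a (Policy.mem_of_toFun_ne_zero ha)).2, one_mul, Nat.cast_succ,
    add_one_mul, Real.exp_add, mul_comm]
  gcongr
  exact hc y a

lemma expCost_pos (hp : IsStochastic Adm p) (n : ℕ) : 0 < expCost Adm p π w hist y n := by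
  obtain ⟨c, hc⟩ := Finite.bddBelow_range (Function.uncurry w)
  exact (Real.exp_pos _).trans_le (exp_mul_le_expCost hp (fun s a => hc ⟨(s, a), rfl⟩) n)

/-- `Φ n y = exp (n G y + H y - m)` is a supersolution: `m ≤ H` gives `Φ 0 ≥ 1`, and since `G`
cannot increase along a transition of `f`, `n G z` may be replaced by `n G y` in the step. -/
lemma expCost_stationary_le (hp : IsStochastic Adm p) {f : S → A} (hf : ∀ s, f s ∈ Adm s)
    {G H : S → ℝ} {m : ℝ} (hG : ∀ y z, 0 < p y (f y) z → G z ≤ G y)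
    (hH : ∀ y, Real.exp (w y (f y)) * ∑ z, p y (f y) z * Real.exp (H z) ≤ Real.exp (G y + H y))
    (hm : ∀ z, m ≤ H z) (n : ℕ) :
    expCost Adm p (stationary Adm f hf) w hist y n ≤ Real.exp (n * G y + H y - m) := by
  refine expCost_le_of_supersolution hp (Φ := fun n y => Real.exp (n * G y + H y - m))
    (fun y => by simpa using hm y) (fun n hist y a ha => ?_) n hist y
  obtain rfl : a = f y := by by_contra h; exact ha (if_neg h)
  have hreach : ∀ z, p y (f y) z * Real.exp (n * G z + H z - m) ≤
      Real.exp (n * G y - m) * (p y (f y) z * Real.exp (H z)) := by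
    intro z
    rcases ((hp y (f y) (hf y)).1 z).eq_or_lt with hz | hz
    · simp [← hz]
    · rw [mul_left_comm, ← Real.exp_add]
      gcongr
      linarith [mul_le_mul_of_nonneg_left (hG y z hz) n.cast_nonneg]
  calc Real.exp (w y (f y)) * ∑ z, p y (f y) z * Real.exp (n * G z + H z - m)
      ≤ Real.exp (w y (f y)) * ∑ z, Real.exp (n * G y - m) * (p y (f y) z * Real.exp (H z)) :=
        mul_le_mul_of_nonneg_left (Finset.sum_le_sum fun z _ => hreach z) (Real.exp_pos _).le
    _ = Real.exp (n * G y - m) * (Real.exp (w y (f y)) * ∑ z, p y (f y) z * Real.exp (H z)) := by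
        rw [← Finset.mul_sum, mul_left_comm]
    _ ≤ Real.exp (n * G y - m) * Real.exp (G y + H y) := by gcongr; exact hH y
    _ = Real.exp ((n + 1 : ℕ) * G y + H y - m) := by rw [← Real.exp_add]; push_cast; ring_nf

lemma Jn_eq_log_expCost (n : ℕ) :
    Jn Adm p C lam π x n =
      lam⁻¹ * Real.log (expCost Adm p π (fun s a => lam * C s a) [] x n) := by
  simp only [Jn, expCost, pathProb, costSum_const_mul, one_div]

lemma Jn_le_iff (hp : IsStochastic Adm p) (hlam : 0 < lam) {r : ℝ} (n : ℕ) :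
    Jn Adm p C lam π x n ≤ r ↔
      expCost Adm p π (fun s a => lam * C s a) [] x n ≤ Real.exp (lam * r) := by
  rw [Jn_eq_log_expCost, inv_mul_le_iff₀ hlam, Real.log_le_iff_le_exp (expCost_pos hp n)]

lemma le_Jn_iff (hp : IsStochastic Adm p) (hlam : 0 < lam) {r : ℝ} (n : ℕ) :
    r ≤ Jn Adm p C lam π x n ↔
      Real.exp (lam * r) ≤ expCost Adm p π (fun s a => lam * C s a) [] x n := by
  rw [Jn_eq_log_expCost, le_inv_mul_iff₀ hlam, Real.le_log_iff_exp_le (expCost_pos hp n)]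

lemma natCast_mul_le_Jn (hp : IsStochastic Adm p) (hlam : 0 < lam) {c : ℝ}
    (hc : ∀ s a, c ≤ C s a) (n : ℕ) : n * c ≤ Jn Adm p C lam π x n := by
  rw [le_Jn_iff hp hlam, mul_left_comm]
  exact exp_mul_le_expCost hp (fun s a => mul_le_mul_of_nonneg_left (hc s a) hlam.le) n

lemma Jn_le_natCast_mul (hp : IsStochastic Adm p) (hlam : 0 < lam) {c : ℝ}
    (hc : ∀ s a, C s a ≤ c) (n : ℕ) : Jn Adm p C lam π x n ≤ n * c := by
  rw [Jn_le_iff hp hlam, mul_left_comm]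
  exact expCost_le_exp_mul hp (fun s a => mul_le_mul_of_nonneg_left (hc s a) hlam.le) n

lemma Jn_stationary_le (hp : IsStochastic Adm p) (hlam : 0 < lam) {f : S → A}
    (hf : ∀ s, f s ∈ Adm s) {g h : S → ℝ} {m : ℝ} (hfg : ∀ y z, 0 < p y (f y) z → g z ≤ g y)
    (hfh : ∀ y, Real.exp (lam * C y (f y)) * ∑ z, p y (f y) z * Real.exp (lam * h z) ≤
      Real.exp (lam * g y + lam * h y))
    (hm : ∀ z, m ≤ h z) (n : ℕ) :
    Jn Adm p C lam (stationary Adm f hf) x n ≤ n * g x + (h x - m) := by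
  rw [Jn_le_iff hp hlam]
  convert expCost_stationary_le hp hf (w := fun s a => lam * C s a) (G := fun y => lam * g y)
    (H := fun y => lam * h y) (fun y z hz => mul_le_mul_of_nonneg_left (hfg y z hz) hlam.le) hfh
    (fun z => mul_le_mul_of_nonneg_left (hm z) hlam.le) n using 2
  ring

end

/-- every `g ∈ 𝒢` dominates the optimal value function. -/
theorem Gclass_upper_bound
    (hA : ∀ x, (Adm x).Nonempty)
    (hp : ∀ (x : S), ∀ a ∈ Adm x, (∀ y, 0 ≤ p x a y) ∧ (∑ y, p x a y) = 1)
    (hlam : 0 < lam)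
    (g : S → ℝ) (hg : g ∈ Gclass Adm p C lam) (x : S) :
    Jopt Adm p C lam x ≤ g x := by
  obtain ⟨h, f, hf, hfg, hfh⟩ := exists_stationary_of_mem_Gclass hA hg
  obtain ⟨c, hc⟩ := Finite.bddBelow_range (Function.uncurry C)
  obtain ⟨c', hc'⟩ := Finite.bddAbove_range (Function.uncurry C)
  obtain ⟨m, hm⟩ := Finite.bddBelow_range h
  have hlow (π : Policy S A Adm) (n : ℕ) : n * c ≤ Jn Adm p C lam π x n :=
    natCast_mul_le_Jn hp hlam (fun s a => hc ⟨(s, a), rfl⟩) n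
  have hbdd : BddBelow (Set.range fun π => Javg Adm p C lam π x) := by
    refine ⟨c, ?_⟩
    rintro _ ⟨π, rfl⟩
    exact le_limsup_div_natCast (hlow π) (Jn_le_natCast_mul hp hlam fun s a => hc' ⟨(s, a), rfl⟩)
  calc Jopt Adm p C lam x ≤ Javg Adm p C lam (stationary Adm f hf) x := ciInf_le hbdd _
    _ ≤ g x := limsup_div_natCast_le (hlow _)
      (Jn_stationary_le hp hlam hf hfg hfh fun z => hm ⟨z, rfl⟩)

end RiskSensitive
end

section
/- Under the simultaneous Doeblin condition, the distinguished state z minimizes the optimal value function: J*(λ,z) = min_{y ∈ S} J*(λ,y). -/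
/-!
From any state `x`, every policy `π` reaches `z` along some finite path `w` of positive
probability: otherwise a stationary policy that stays among the states `π` can reach would
never visit `z`, and its expected hitting time of `z` would be infinite, against the Doeblin
condition. Let `σ` be `π` continued after the history `w`. Keeping only the trajectories that
start with `w`,
`E_x^π[exp(λ S_{|w|+n})] ≥ P_x^π(w) e^{λ C(w)} E_z^σ[exp(λ S_n)]` with
`S_n = Σ_{t<n} C(X_t,A_t)`, so `J_n(σ,z) + K ≤ J_{|w|+n}(π,x)` for a constant `K`.
Dividing by `n` and passing to the limsup gives `J(σ,z) ≤ J(π,x)`, hence `J*(z) ≤ J*(x)`.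
-/

open scoped Classical BigOperators ENNReal

namespace RiskSensitive

variable {S A : Type*} [Fintype S] [Fintype A]
variable (Adm : S → Finset A) (p : S → A → S → ℝ) (C : S → A → ℝ) (lam : ℝ)

noncomputable def expectedExpCost (π : Policy S A Adm) (x : S) (n : ℕ) : ℝ :=
  ∑ v : Fin n → A × S,
    pathProb Adm p π x (List.ofFn v) * Real.exp (lam * costSum C x (List.ofFn v))

def Reachable (π : Policy S A Adm) (x y : S) : Prop :=
  ∃ w, 0 < pathProb Adm p π x w ∧ lastState x w = y

section

variable {Adm p C lam}

open Filter

theorem pathProbAux_append (π : Policy S A Adm) (l₁ l₂ : List (A × S)) (h : List (S × A))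
    (x : S) :
    pathProbAux Adm p π h x (l₁ ++ l₂) =
      pathProbAux Adm p π h x l₁ *
        pathProbAux Adm p π (h ++ histOf x l₁) (lastState x l₁) l₂ := by
  induction l₁ generalizing h x with
  | nil => simp [pathProbAux, histOf, lastState]
  | cons q l₁ ih =>
    obtain ⟨a, y⟩ := q
    simp only [List.cons_append, pathProbAux, ih, histOf, lastState, List.foldl_cons,
      List.append_assoc, List.nil_append]
    ring

theorem pathProbAux_shiftPolicy (π : Policy S A Adm) (pre : List (S × A)) (l : List (A × S))
    (h : List (S × A)) (x : S) :
    pathProbAux Adm p (shiftPolicy Adm π pre) h x l = pathProbAux Adm p π (pre ++ h) x l := by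
  induction l generalizing h x with
  | nil => rfl
  | cons q l ih =>
    obtain ⟨a, y⟩ := q
    simp only [pathProbAux, ih, List.append_assoc]
    rfl

theorem pathProb_append (π : Policy S A Adm) (x : S) (l₁ l₂ : List (A × S)) :
    pathProb Adm p π x (l₁ ++ l₂) =
      pathProb Adm p π x l₁ *
        pathProb Adm p (shiftPolicy Adm π (histOf x l₁)) (lastState x l₁) l₂ := by
  simp [pathProb, pathProbAux_append, pathProbAux_shiftPolicy]

theorem costSum_append (w : S → A → ℝ) (l₁ l₂ : List (A × S)) (x : S) :
    costSum w x (l₁ ++ l₂) = costSum w x l₁ + costSum w (lastState x l₁) l₂ := by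
  induction l₁ generalizing x with
  | nil => simp [costSum, lastState]
  | cons q l₁ ih =>
    obtain ⟨a, y⟩ := q
    simp only [List.cons_append, costSum, ih, lastState, List.foldl_cons]
    ring

theorem abs_costSum_le (l : List (A × S)) (x : S) : |costSum C x l| ≤ ‖C‖ * l.length := by
  induction l generalizing x with
  | nil => simp [costSum]
  | cons q l ih =>
    obtain ⟨a, y⟩ := q
    have hCxa : |C x a| ≤ ‖C‖ := (norm_le_pi_norm (C x) a).trans (norm_le_pi_norm C x)
    calc |C x a + costSum C y l| ≤ |C x a| + |costSum C y l| := abs_add_le _ _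
      _ ≤ ‖C‖ + ‖C‖ * l.length := add_le_add hCxa (ih y)
      _ = ‖C‖ * (l.length + 1 : ℕ) := by push_cast; ring

theorem Policy.toFun_mul_nonneg (hp₀ : ∀ x, ∀ a ∈ Adm x, ∀ y, 0 ≤ p x a y)
    (π : Policy S A Adm) (h : List (S × A)) (x : S) (a : A) (y : S) :
    0 ≤ π.toFun h x a * p x a y := by
  by_cases ha : a ∈ Adm x
  · exact mul_nonneg (π.nonneg h x a) (hp₀ x a ha y)
  · simp [π.supp h x a ha]

theorem pathProbAux_nonneg (hp₀ : ∀ x, ∀ a ∈ Adm x, ∀ y, 0 ≤ p x a y) (π : Policy S A Adm)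
    (l : List (A × S)) (h : List (S × A)) (x : S) : 0 ≤ pathProbAux Adm p π h x l := by
  induction l generalizing h x with
  | nil => exact zero_le_one
  | cons q l ih => exact mul_nonneg (π.toFun_mul_nonneg hp₀ h x q.1 q.2) (ih _ _)

theorem sum_pathProbAux_ofFn (hp₁ : ∀ x, ∀ a ∈ Adm x, ∑ y, p x a y = 1) (π : Policy S A Adm)
    (n : ℕ) (h : List (S × A)) (x : S) :
    ∑ v : Fin n → A × S, pathProbAux Adm p π h x (List.ofFn v) = 1 := by
  induction n generalizing h x with
  | zero => simp [pathProbAux]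
  | succ n ih =>
    have hstep (a : A) : ∑ y, π.toFun h x a * p x a y = π.toFun h x a := by
      by_cases ha : a ∈ Adm x
      · rw [← Finset.mul_sum, hp₁ x a ha, mul_one]
      · simp [π.supp h x a ha]
    rw [← (Fin.consEquiv fun _ => A × S).sum_comp, Fintype.sum_prod_type,
      Fintype.sum_prod_type]
    simp only [Fin.consEquiv_apply, List.ofFn_succ, Fin.cons_zero, Fin.cons_succ,
      pathProbAux, ← Finset.mul_sum, ih, mul_one, hstep, π.sum_one]

theorem sum_mul_exp_pos {ι : Type*} [Fintype ι] {w : ι → ℝ} (hw₀ : ∀ i, 0 ≤ w i)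
    (hw₁ : ∑ i, w i = 1) (f : ι → ℝ) : 0 < ∑ i, w i * Real.exp (f i) := by
  obtain ⟨i, -, hi⟩ := Finset.exists_lt_of_sum_lt (s := Finset.univ) (f := fun _ => (0 : ℝ))
    (g := w) (by simp [hw₁])
  exact Finset.sum_pos' (fun j _ => mul_nonneg (hw₀ j) (Real.exp_pos _).le)
    ⟨i, Finset.mem_univ i, mul_pos hi (Real.exp_pos _)⟩

theorem abs_log_sum_mul_exp_le {ι : Type*} [Fintype ι] {w f : ι → ℝ} {B : ℝ}
    (hw₀ : ∀ i, 0 ≤ w i) (hw₁ : ∑ i, w i = 1) (hf : ∀ i, |f i| ≤ B) :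
    |Real.log (∑ i, w i * Real.exp (f i))| ≤ B := by
  have hpos := sum_mul_exp_pos hw₀ hw₁ f
  rw [abs_le, Real.le_log_iff_exp_le hpos, Real.log_le_iff_le_exp hpos]
  constructor
  · calc Real.exp (-B) = ∑ i, w i * Real.exp (-B) := by rw [← Finset.sum_mul, hw₁, one_mul]
      _ ≤ ∑ i, w i * Real.exp (f i) := Finset.sum_le_sum fun i _ =>
          mul_le_mul_of_nonneg_left (Real.exp_le_exp.2 (neg_le_of_abs_le (hf i))) (hw₀ i)
  · calc ∑ i, w i * Real.exp (f i) ≤ ∑ i, w i * Real.exp B := Finset.sum_le_sum fun i _ =>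
          mul_le_mul_of_nonneg_left (Real.exp_le_exp.2 (le_of_abs_le (hf i))) (hw₀ i)
      _ = Real.exp B := by rw [← Finset.sum_mul, hw₁, one_mul]

theorem Jn_eq_log_expectedExpCost (π : Policy S A Adm) (x : S) (n : ℕ) :
    Jn Adm p C lam π x n = (1 / lam) * Real.log (expectedExpCost Adm p C lam π x n) := rfl

theorem expectedExpCost_pos (hp₀ : ∀ x, ∀ a ∈ Adm x, ∀ y, 0 ≤ p x a y)
    (hp₁ : ∀ x, ∀ a ∈ Adm x, ∑ y, p x a y = 1) (π : Policy S A Adm) (x : S) (n : ℕ) :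
    0 < expectedExpCost Adm p C lam π x n :=
  sum_mul_exp_pos (fun _ => pathProbAux_nonneg hp₀ π _ _ _) (sum_pathProbAux_ofFn hp₁ π n [] x) _

theorem abs_Jn_le (hp₀ : ∀ x, ∀ a ∈ Adm x, ∀ y, 0 ≤ p x a y)
    (hp₁ : ∀ x, ∀ a ∈ Adm x, ∑ y, p x a y = 1) (π : Policy S A Adm) (x : S) (n : ℕ) :
    |Jn Adm p C lam π x n| ≤ ‖C‖ * n := by
  have hlog : |Real.log (expectedExpCost Adm p C lam π x n)| ≤ |lam| * (‖C‖ * n) := by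
    refine abs_log_sum_mul_exp_le (fun _ => pathProbAux_nonneg hp₀ π _ _ _)
      (sum_pathProbAux_ofFn hp₁ π n [] x) fun v => ?_
    rw [abs_mul]
    have := abs_costSum_le (C := C) (List.ofFn v) x
    rw [List.length_ofFn] at this
    exact mul_le_mul_of_nonneg_left this (abs_nonneg lam)
  rw [Jn_eq_log_expectedExpCost, abs_mul, abs_div, abs_one]
  rcases eq_or_ne lam 0 with rfl | hlam
  · rw [abs_zero, div_zero, zero_mul]
    positivity
  · calc 1 / |lam| * |Real.log (expectedExpCost Adm p C lam π x n)|
        ≤ 1 / |lam| * (|lam| * (‖C‖ * n)) := by gcongr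
      _ = ‖C‖ * n := by field_simp

theorem abs_Jn_div_le (hp₀ : ∀ x, ∀ a ∈ Adm x, ∀ y, 0 ≤ p x a y)
    (hp₁ : ∀ x, ∀ a ∈ Adm x, ∑ y, p x a y = 1) (π : Policy S A Adm) (x : S) (n : ℕ) :
    |Jn Adm p C lam π x n / n| ≤ ‖C‖ := by
  rcases Nat.eq_zero_or_pos n with rfl | hn
  · simp
  · rw [abs_div, Nat.abs_cast, div_le_iff₀ (by exact_mod_cast hn)]
    exact abs_Jn_le hp₀ hp₁ π x n

theorem mul_expectedExpCost_shiftPolicy_le (hp₀ : ∀ x, ∀ a ∈ Adm x, ∀ y, 0 ≤ p x a y)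
    (π : Policy S A Adm) (x : S) (w : List (A × S)) (n : ℕ) :
    pathProb Adm p π x w * Real.exp (lam * costSum C x w) *
        expectedExpCost Adm p C lam (shiftPolicy Adm π (histOf x w)) (lastState x w) n ≤
      expectedExpCost Adm p C lam π x (w.length + n) := by
  set term : (Fin (w.length + n) → A × S) → ℝ := fun v =>
    pathProb Adm p π x (List.ofFn v) * Real.exp (lam * costSum C x (List.ofFn v))
  have hterm (v) : 0 ≤ term v := mul_nonneg (pathProbAux_nonneg hp₀ π _ _ _) (Real.exp_pos _).le
  calc _ = ∑ v : Fin n → A × S, term (Fin.append w.get v) := by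
        rw [expectedExpCost, Finset.mul_sum]
        refine Finset.sum_congr rfl fun v _ => ?_
        simp only [term, List.ofFn_fin_append, List.ofFn_get, pathProb_append, costSum_append,
          mul_add, Real.exp_add]
        ring
    _ ≤ ∑ u : Fin w.length → A × S, ∑ v : Fin n → A × S, term (Fin.append u v) :=
        Finset.single_le_sum (f := fun u => ∑ v : Fin n → A × S, term (Fin.append u v))
          (fun u _ => Finset.sum_nonneg fun v _ => hterm _) (Finset.mem_univ w.get)
    _ = expectedExpCost Adm p C lam π x (w.length + n) := by
        rw [← Fintype.sum_prod_type']
        exact (Fin.appendEquiv w.length n).sum_comp term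

theorem Jn_shiftPolicy_add_le (hp₀ : ∀ x, ∀ a ∈ Adm x, ∀ y, 0 ≤ p x a y)
    (hp₁ : ∀ x, ∀ a ∈ Adm x, ∑ y, p x a y = 1) (hlam : 0 < lam) (π : Policy S A Adm) (x : S)
    (w : List (A × S)) (hw : 0 < pathProb Adm p π x w) (n : ℕ) :
    Jn Adm p C lam (shiftPolicy Adm π (histOf x w)) (lastState x w) n +
        ((1 / lam) * Real.log (pathProb Adm p π x w) + costSum C x w) ≤
      Jn Adm p C lam π x (w.length + n) := by
  have hZ := expectedExpCost_pos (C := C) (lam := lam) hp₀ hp₁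
    (shiftPolicy Adm π (histOf x w)) (lastState x w) n
  have hlog := Real.log_le_log (by positivity) (mul_expectedExpCost_shiftPolicy_le hp₀ π x w n)
  rw [Real.log_mul (by positivity) hZ.ne', Real.log_mul hw.ne' (Real.exp_pos _).ne',
    Real.log_exp] at hlog
  rw [Jn_eq_log_expectedExpCost, Jn_eq_log_expectedExpCost]
  calc (1 / lam) * Real.log (expectedExpCost Adm p C lam (shiftPolicy Adm π (histOf x w))
          (lastState x w) n) + ((1 / lam) * Real.log (pathProb Adm p π x w) + costSum C x w)
      = (1 / lam) * (Real.log (pathProb Adm p π x w) + lam * costSum C x w +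
        Real.log (expectedExpCost Adm p C lam (shiftPolicy Adm π (histOf x w))
          (lastState x w) n)) := by field_simp; ring
    _ ≤ _ := by gcongr

theorem div_le_div_add_of_add_le {a b c K : ℝ} {n k : ℕ} (hn : 1 ≤ n)
    (hb : b ≤ c * (n + k : ℕ)) (hab : a + K ≤ b) :
    a / n ≤ b / (n + k : ℕ) + (c * k + |K|) / n := by
  have hn' : (0 : ℝ) < n := by exact_mod_cast hn
  have hnk : (0 : ℝ) ≤ n + k := by positivity
  push_cast at hb ⊢
  have h₁ := mul_le_mul_of_nonneg_right hab hnk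
  have h₂ := mul_le_mul_of_nonneg_right hb (Nat.cast_nonneg (α := ℝ) k)
  have h₃ := mul_le_mul_of_nonneg_right (neg_le_abs K) hnk
  have key : a * (n + k) ≤ b * n + (n + k) * (c * k + |K|) := by linarith
  rw [div_add_div _ _ (by positivity) hn'.ne', div_le_div_iff₀ hn' (by positivity)]
  nlinarith [mul_le_mul_of_nonneg_right key hn'.le]

theorem limsup_div_le_of_add_le_shift {a b : ℕ → ℝ} {c K : ℝ} {k : ℕ}
    (ha : ∀ n, |a n| ≤ c * n) (hb : ∀ n, |b n| ≤ c * n) (hab : ∀ n, a n + K ≤ b (k + n)) :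
    limsup (fun n => a n / n) atTop ≤
      limsup (fun n => b n / n) atTop := by
  have hc : 0 ≤ c := by simpa using (abs_nonneg _).trans (hb 1)
  have hratio {u : ℕ → ℝ} (hu : ∀ n, |u n| ≤ c * n) (n : ℕ) : |u n / n| ≤ c := by
    rcases Nat.eq_zero_or_pos n with rfl | hn
    · simpa using hc
    · rw [abs_div, Nat.abs_cast, div_le_iff₀ (by exact_mod_cast hn)]
      exact hu n
  set e : ℕ → ℝ := fun n => (c * k + |K|) / n
  have he : Tendsto e atTop (nhds 0) := tendsto_const_div_atTop_nhds_zero_nat _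
  have he₀ (n : ℕ) : 0 ≤ e n := by positivity
  have hshift (n : ℕ) (hn : 1 ≤ n) : a n / n ≤ b (n + k) / (n + k : ℕ) + e n :=
    div_le_div_add_of_add_le hn (le_of_abs_le (hb (n + k))) (add_comm k n ▸ hab n)
  calc limsup (fun n => a n / n) atTop
      ≤ limsup (fun n => b (n + k) / (n + k : ℕ) + e n) atTop :=
        limsup_le_limsup (eventually_atTop.2 ⟨1, hshift⟩)
          (isCoboundedUnder_le_of_le _ fun n => neg_le_of_abs_le (hratio ha n))
          (isBoundedUnder_le_add
            (isBoundedUnder_of ⟨c, fun n => le_of_abs_le (hratio hb (n + k))⟩)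
            he.isBoundedUnder_le)
    _ ≤ limsup (fun n => b (n + k) / (n + k : ℕ)) atTop +
          limsup e atTop :=
        limsup_add_le (isBoundedUnder_of ⟨-c, fun n => neg_le_of_abs_le (hratio hb _)⟩)
          (isBoundedUnder_of ⟨c, fun n => le_of_abs_le (hratio hb _)⟩)
          (isCoboundedUnder_le_of_le _ he₀) he.isBoundedUnder_le
    _ = limsup (fun n => b n / n) atTop := by
        rw [he.limsup_eq, add_zero, limsup_nat_add (fun n => b n / n) k]

theorem Javg_shiftPolicy_le (hp₀ : ∀ x, ∀ a ∈ Adm x, ∀ y, 0 ≤ p x a y)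
    (hp₁ : ∀ x, ∀ a ∈ Adm x, ∑ y, p x a y = 1) (hlam : 0 < lam) (π : Policy S A Adm) (x : S)
    (w : List (A × S)) (hw : 0 < pathProb Adm p π x w) :
    Javg Adm p C lam (shiftPolicy Adm π (histOf x w)) (lastState x w) ≤ Javg Adm p C lam π x :=
  limsup_div_le_of_add_le_shift
    (abs_Jn_le hp₀ hp₁ _ _) (abs_Jn_le hp₀ hp₁ _ _)
    (Jn_shiftPolicy_add_le hp₀ hp₁ hlam π x w hw)

theorem bddBelow_range_Javg (hp₀ : ∀ x, ∀ a ∈ Adm x, ∀ y, 0 ≤ p x a y)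
    (hp₁ : ∀ x, ∀ a ∈ Adm x, ∑ y, p x a y = 1) (x : S) :
    BddBelow (Set.range fun π : Policy S A Adm => Javg Adm p C lam π x) := by
  refine ⟨-‖C‖, ?_⟩
  rintro _ ⟨π, rfl⟩
  exact le_limsup_of_frequently_le
    (Frequently.of_forall fun n => neg_le_of_abs_le (abs_Jn_div_le hp₀ hp₁ π x n))
    (isBoundedUnder_of ⟨‖C‖, fun n => le_of_abs_le (abs_Jn_div_le hp₀ hp₁ π x n)⟩)

theorem Policy.exists_mem_toFun_pos (π : Policy S A Adm) (h : List (S × A)) (s : S) :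
    ∃ a ∈ Adm s, 0 < π.toFun h s a := by
  obtain ⟨a, -, ha⟩ := Finset.exists_lt_of_sum_lt (s := Finset.univ) (f := fun _ => (0 : ℝ))
    (g := π.toFun h s) (by simp [π.sum_one])
  refine ⟨a, ?_, ha⟩
  by_contra hna
  exact ha.ne' (π.supp h s a hna)

theorem Reachable.exists_action {π : Policy S A Adm} {x s : S} (hs : Reachable Adm p π x s) :
    ∃ a ∈ Adm s, ∀ y, 0 < p s a y → Reachable Adm p π x y := by
  obtain ⟨w, hw, rfl⟩ := hs
  obtain ⟨a, ha, hπa⟩ := π.exists_mem_toFun_pos (histOf x w) (lastState x w)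
  refine ⟨a, ha, fun y hy => ⟨w ++ [(a, y)], ?_, ?_⟩⟩
  · rw [pathProb_append]
    have hstep : pathProb Adm p (shiftPolicy Adm π (histOf x w)) (lastState x w) [(a, y)] =
        π.toFun (histOf x w) (lastState x w) a * p (lastState x w) a y := by
      simp [pathProb, pathProbAux, shiftPolicy]
    rw [hstep]
    positivity
  · simp [lastState]

theorem mem_of_pathProbAux_stationary_ne_zero (hp₀ : ∀ x, ∀ a ∈ Adm x, ∀ y, 0 ≤ p x a y)
    {f : S → A} (hf : ∀ s, f s ∈ Adm s) {R : Set S}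
    (hR : ∀ s ∈ R, ∀ y, 0 < p s (f s) y → y ∈ R) (l : List (A × S)) (h : List (S × A))
    {s : S} (hs : s ∈ R) (hl : pathProbAux Adm p (stationary Adm f hf) h s l ≠ 0) :
    ∀ q ∈ l, q.2 ∈ R := by
  induction l generalizing h s with
  | nil => simp
  | cons q l ih =>
    obtain ⟨a, y⟩ := q
    simp only [pathProbAux, stationary, mul_ne_zero_iff, ite_ne_right_iff] at hl
    obtain ⟨⟨⟨rfl, -⟩, hpy⟩, hrest⟩ := hl
    have hy : y ∈ R := hR s hs y (lt_of_le_of_ne (hp₀ s _ (hf s) y) (Ne.symm hpy))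
    intro q hq
    rcases List.mem_cons.1 hq with rfl | hq
    · exact hy
    · exact ih _ hy hrest q hq

theorem cylProb_eq_one (hp₁ : ∀ x, ∀ a ∈ Adm x, ∑ y, p x a y = 1) (π : Policy S A Adm)
    (x : S) (n : ℕ) {E : (Fin n → A × S) → Prop}
    (hE : ∀ v, pathProb Adm p π x (List.ofFn v) ≠ 0 → E v) : cylProb Adm p π x n E = 1 := by
  rw [cylProb, ← sum_pathProbAux_ofFn hp₁ π n [] x]
  refine Finset.sum_congr rfl fun v _ => ?_
  by_cases hv : pathProb Adm p π x (List.ofFn v) = 0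
  · rw [hv, ite_self]
    exact hv.symm
  · exact if_pos (hE v hv)

theorem ExpT_stationary_eq_top (hp₀ : ∀ x, ∀ a ∈ Adm x, ∀ y, 0 ≤ p x a y)
    (hp₁ : ∀ x, ∀ a ∈ Adm x, ∑ y, p x a y = 1) {f : S → A} (hf : ∀ s, f s ∈ Adm s)
    {R : Set S} (hR : ∀ s ∈ R, ∀ y, 0 < p s (f s) y → y ∈ R) {x z : S} (hx : x ∈ R)
    (hz : z ∉ R) : ExpT Adm p (stationary Adm f hf) x z = ⊤ := by
  have hsurv (n : ℕ) : cylProb Adm p (stationary Adm f hf) x n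
      (fun v => ∀ t : Fin n, (v t).2 ≠ z) = 1 :=
    cylProb_eq_one hp₁ _ x n fun v hv t htz => hz <| htz ▸
      mem_of_pathProbAux_stationary_ne_zero hp₀ hf hR _ [] hx hv (v t) (List.mem_ofFn.2 ⟨t, rfl⟩)
  simp only [ExpT, hsurv, ENNReal.ofReal_one]
  exact ENNReal.tsum_const_eq_top_of_ne_zero one_ne_zero

theorem Doeblin.reachable (hA : ∀ x, (Adm x).Nonempty)
    (hp₀ : ∀ x, ∀ a ∈ Adm x, ∀ y, 0 ≤ p x a y) (hp₁ : ∀ x, ∀ a ∈ Adm x, ∑ y, p x a y = 1)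
    {z : S} {M : ℝ} (hDoe : Doeblin Adm p z M) (π : Policy S A Adm) (x : S) :
    Reachable Adm p π x z := by
  by_contra hz
  set R : Set S := {s | Reachable Adm p π x s}
  have hchoice (s : S) : ∃ a ∈ Adm s, s ∈ R → ∀ y, 0 < p s a y → y ∈ R := by
    by_cases hs : s ∈ R
    · obtain ⟨a, ha, hR⟩ := hs.exists_action
      exact ⟨a, ha, fun _ => hR⟩
    · obtain ⟨a, ha⟩ := hA s
      exact ⟨a, ha, fun h => absurd h hs⟩
  choose f hf hR using hchoice
  have hx : x ∈ R := ⟨[], by simp [pathProb, pathProbAux], rfl⟩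
  have htop := ExpT_stationary_eq_top hp₀ hp₁ hf hR hx hz
  exact ENNReal.ofReal_ne_top (top_le_iff.1 (htop ▸ hDoe.2 x f hf))

theorem Jopt_le_Javg_of_reachable (hp₀ : ∀ x, ∀ a ∈ Adm x, ∀ y, 0 ≤ p x a y)
    (hp₁ : ∀ x, ∀ a ∈ Adm x, ∑ y, p x a y = 1) (hlam : 0 < lam) {π : Policy S A Adm}
    {x z : S} (hz : Reachable Adm p π x z) : Jopt Adm p C lam z ≤ Javg Adm p C lam π x := by
  obtain ⟨w, hw, rfl⟩ := hz
  exact (ciInf_le (bddBelow_range_Javg hp₀ hp₁ _) _).trans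
    (Javg_shiftPolicy_le hp₀ hp₁ hlam π x w hw)

end

/-- under the Doeblin condition, the distinguished state `z` minimizes the
optimal value function. -/
theorem z_minimizes_Jopt
    (hA : ∀ x, (Adm x).Nonempty)
    (hp : ∀ (x : S), ∀ a ∈ Adm x, (∀ y, 0 ≤ p x a y) ∧ (∑ y, p x a y) = 1)
    (hlam : 0 < lam)
    (z : S) (M : ℝ) (hDoe : Doeblin Adm p z M) :
    Jopt Adm p C lam z = ⨅ y : S, Jopt Adm p C lam y := by
  have hp₀ : ∀ x, ∀ a ∈ Adm x, ∀ y, 0 ≤ p x a y := fun x a ha => (hp x a ha).1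
  have hp₁ : ∀ x, ∀ a ∈ Adm x, ∑ y, p x a y = 1 := fun x a ha => (hp x a ha).2
  have : Nonempty S := ⟨z⟩
  have : Nonempty (Policy S A Adm) :=
    ⟨stationary Adm (fun s => (hA s).choose) fun s => (hA s).choose_spec⟩
  refine le_antisymm (le_ciInf fun y => le_ciInf fun π => ?_)
    (ciInf_le (Set.finite_range _).bddBelow z)
  exact Jopt_le_Javg_of_reachable hp₀ hp₁ hlam (hDoe.reachable hA hp₀ hp₁ π y)

end RiskSensitive
end
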